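/- arXiv:1309.7239 — 2 statements merged into one kernel-verified Lean document; each statement's English description precedes it below -/
import Mathlib

section
/- For any two tuples of integers a = (a_1, ..., a_n) with a_1 ≥ ... ≥ a_n and a' = (a'_1, ..., a'_n) with a'_1 ≥ ... ≥ a'_n, one has the equality of subsets of GL_n(ℚ_p): (I d_a I) · (I d_{a'} I) = I d_{a+a'} I. (This is the set-theoretic form of the Hecke-algebra relation U(a_1,...,a_n)·U(a'_1,...,a'_n) = U(a_1+a'_1,...,a_n+a'_n), which makes the Atkin–Lehner monoid 𝒰⁻ multiplicative.) -/
open Pointwise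

/-- The Iwahori subgroup of `GL_n(ℚ_p)`: matrices with entries in `ℤ_p`, determinant a
`p`-adic unit, and entries strictly below the diagonal in `pℤ_p`. -/
def Iwahori (p : ℕ) [Fact p.Prime] (n : ℕ) :
    Set (Matrix.GeneralLinearGroup (Fin n) ℚ_[p]) :=
  {g | (∀ i j : Fin n, ‖(g : Matrix (Fin n) (Fin n) ℚ_[p]) i j‖ ≤ 1) ∧
    ‖(g : Matrix (Fin n) (Fin n) ℚ_[p]).det‖ = 1 ∧
    ∀ i j : Fin n, j < i → ‖(g : Matrix (Fin n) (Fin n) ℚ_[p]) i j‖ < 1}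

/-- The diagonal matrix `diag(p^{a_1}, ..., p^{a_n})` as an element of `GL_n(ℚ_p)`. -/
noncomputable def dGL (p : ℕ) [Fact p.Prime] (n : ℕ) (a : Fin n → ℤ) :
    Matrix.GeneralLinearGroup (Fin n) ℚ_[p] :=
  Matrix.GeneralLinearGroup.mkOfDetNeZero
    (Matrix.diagonal fun i => (p : ℚ_[p]) ^ (a i))
    (by
      rw [Matrix.det_diagonal]
      exact Finset.prod_ne_zero_iff.2 fun i _ =>
        zpow_ne_zero _ (Nat.cast_ne_zero.mpr (Fact.out : p.Prime).ne_zero))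

/-!
Write `I` for the Iwahori subgroup and `d_a` for `diag(p^{a_1}, …, p^{a_n})`. Every `g ∈ I`
factors as `g = B U` with `B ∈ I` upper triangular and `U ∈ I` lower triangular: peel off the
last row and column, whose corner entry is a unit, and recurse on the Schur complement. For `a`
decreasing, conjugation `x ↦ d_a x d_a⁻¹` multiplies the entry `(i, j)` by `p^{a_i - a_j}`, so it
keeps upper triangular elements of `I` inside `I`, and `x ↦ d_a⁻¹ x d_a` does the same for lower
triangular ones. Hence
`d_a g d_{a'} = (d_a B d_a⁻¹) d_{a+a'} (d_{a'}⁻¹ U d_{a'}) ∈ I d_{a+a'} I`,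
which gives `(I d_a I)(I d_{a'} I) ⊆ I d_{a+a'} I`; the reverse inclusion is `1 ∈ I`.
-/

section Ultrametric

variable {E : Type*} [SeminormedAddCommGroup E] [IsUltrametricDist E]

lemma norm_sum_lt_one {ι : Type*} {s : Finset ι} {f : ι → E} (h : ∀ i ∈ s, ‖f i‖ < 1) :
    ‖∑ i ∈ s, f i‖ < 1 := by
  obtain rfl | hs := s.eq_empty_or_nonempty
  · simp
  obtain ⟨i, hi, hle⟩ := IsUltrametricDist.exists_norm_finsetSum_le_of_nonempty hs f
  exact hle.trans_lt (h i hi)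

lemma norm_sub_le_max (x y : E) : ‖x - y‖ ≤ max ‖x‖ ‖y‖ := by
  simpa [sub_eq_add_neg] using IsUltrametricDist.norm_add_le_max x (-y)

lemma norm_eq_one_iff_of_norm_sub_lt_one {x y : E} (h : ‖x - y‖ < 1) : ‖x‖ = 1 ↔ ‖y‖ = 1 := by
  have key : ∀ {x y : E}, ‖x - y‖ < 1 → ‖x‖ = 1 → ‖y‖ = 1 := fun {x y} h hx => by
    have := IsUltrametricDist.norm_add_eq_max_of_norm_ne_norm (x := x) (y := y - x)
      (by rw [norm_sub_rev, hx]; exact h.ne')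
    rwa [add_sub_cancel, norm_sub_rev, hx, max_eq_left h.le] at this
  exact ⟨key h, key (norm_sub_rev x y ▸ h)⟩

end Ultrametric

lemma Finset.prod_le_of_le_one {ι R : Type*} [Fintype ι] [CommMonoidWithZero R] [PartialOrder R]
    [ZeroLEOneClass R] [PosMulMono R] {f : ι → R} (h0 : ∀ i, 0 ≤ f i)
    (h1 : ∀ i, f i ≤ 1) (i : ι) : ∏ j, f j ≤ f i := by
  simpa using Finset.prod_le_prod_of_subset_of_le_one (Finset.subset_univ {i})
    (fun j _ => h0 j) (fun j _ _ => h1 j)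

lemma Equiv.Perm.eq_one_of_forall_apply_le {n : ℕ} {σ : Equiv.Perm (Fin n)}
    (h : ∀ i, σ i ≤ i) : σ = 1 := by
  have hsum : ∑ i, ((σ i : Fin n) : ℕ) = ∑ i : Fin n, (i : ℕ) :=
    Equiv.sum_comp σ (fun i => (i : ℕ))
  rw [Finset.sum_eq_sum_iff_of_le fun i _ => Fin.le_iff_val_le_val.mp (h i)] at hsum
  exact Equiv.ext fun i => Fin.ext (hsum i (Finset.mem_univ i))

namespace Matrix

variable {K : Type*} [NormedField K] {n : ℕ}

section Block

variable {R : Type*}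

/-- The block matrix `!![A, c; rᵀ, d]`. -/
def blockLast (A : Matrix (Fin n) (Fin n) R) (c r : Fin n → R) (d : R) :
    Matrix (Fin (n + 1)) (Fin (n + 1)) R :=
  of fun i j => Fin.lastCases (Fin.lastCases d r j) (fun i => Fin.lastCases (c i) (A i) j) i

section

variable (A : Matrix (Fin n) (Fin n) R) (c r : Fin n → R) (d : R)

@[simp] lemma blockLast_castSucc_castSucc (i j : Fin n) :
    blockLast A c r d i.castSucc j.castSucc = A i j := by
  simp [blockLast]

@[simp] lemma blockLast_castSucc_last (i : Fin n) :
    blockLast A c r d i.castSucc (Fin.last n) = c i := by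
  simp [blockLast]

@[simp] lemma blockLast_last_castSucc (j : Fin n) :
    blockLast A c r d (Fin.last n) j.castSucc = r j := by
  simp [blockLast]

@[simp] lemma blockLast_last_last : blockLast A c r d (Fin.last n) (Fin.last n) = d := by
  simp [blockLast]

end

lemma blockLast_eta (M : Matrix (Fin (n + 1)) (Fin (n + 1)) R) :
    blockLast (M.submatrix Fin.castSucc Fin.castSucc) (fun i => M i.castSucc (Fin.last n))
      (fun j => M (Fin.last n) j.castSucc) (M (Fin.last n) (Fin.last n)) = M := by
  ext i j
  induction i using Fin.lastCases <;> induction j using Fin.lastCases <;> simp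

lemma blockLast_mul_blockLast [CommSemiring R] (A B : Matrix (Fin n) (Fin n) R)
    (c r : Fin n → R) (d e : R) :
    blockLast A c 0 d * blockLast B 0 r e =
      blockLast (A * B + vecMulVec c r) (fun i => c i * e) (fun j => d * r j) (d * e) := by
  ext i j
  induction i using Fin.lastCases <;> induction j using Fin.lastCases <;>
    simp [mul_apply, Fin.sum_univ_castSucc, vecMulVec_apply]

lemma IsUpperTriangular.blockLast [Zero R] {A : Matrix (Fin n) (Fin n) R}
    (hA : A.IsUpperTriangular) (c : Fin n → R) (d : R) :
    (blockLast A c 0 d).IsUpperTriangular := by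
  intro i j hij
  induction i using Fin.lastCases <;> induction j using Fin.lastCases <;>
    simp_all [BlockTriangular, (Fin.le_last _).not_gt]

lemma IsLowerTriangular.blockLast [Zero R] {A : Matrix (Fin n) (Fin n) R}
    (hA : A.IsLowerTriangular) (r : Fin n → R) (d : R) :
    (blockLast A 0 r d).IsLowerTriangular := by
  intro i j hij
  induction i using Fin.lastCases <;> induction j using Fin.lastCases <;>
    simp_all [BlockTriangular, (Fin.le_last _).not_gt]

end Block

structure IsIwahori (M : Matrix (Fin n) (Fin n) K) : Prop where
  norm_le_one : ∀ i j, ‖M i j‖ ≤ 1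
  norm_lt_one : ∀ i j, j < i → ‖M i j‖ < 1
  norm_diag : ∀ i, ‖M i i‖ = 1

lemma IsIwahori.diagonal_mul_mul_diagonal {M : Matrix (Fin n) (Fin n) K} (hM : IsIwahori M)
    {v w : Fin n → K} (hvw : ∀ i, ‖v i * w i‖ = 1)
    (hle : ∀ i j, M i j ≠ 0 → ‖v i * w j‖ ≤ 1) :
    IsIwahori (diagonal v * M * diagonal w) := by
  have happly : ∀ i j, (diagonal v * M * diagonal w) i j = v i * w j * M i j := fun i j => by
    rw [mul_diagonal, diagonal_mul]; ring
  have hnorm : ∀ i j, ‖(diagonal v * M * diagonal w) i j‖ ≤ ‖M i j‖ := fun i j => by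
    by_cases h : M i j = 0
    · simp [happly, h]
    · rw [happly, norm_mul]
      exact mul_le_of_le_one_left (norm_nonneg _) (hle i j h)
  exact ⟨fun i j => (hnorm i j).trans (hM.norm_le_one i j),
    fun i j hij => (hnorm i j).trans_lt (hM.norm_lt_one i j hij),
    fun i => by rw [happly, norm_mul, hvw, hM.norm_diag, one_mul]⟩

lemma isIwahori_blockLast_iff {A : Matrix (Fin n) (Fin n) K} {c r : Fin n → K} {d : K} :
    IsIwahori (blockLast A c r d) ↔
      IsIwahori A ∧ (∀ i, ‖c i‖ ≤ 1) ∧ (∀ j, ‖r j‖ < 1) ∧ ‖d‖ = 1 := by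
  constructor
  · rintro ⟨h1, h2, h3⟩
    refine ⟨⟨fun i j => ?_, fun i j hij => ?_, fun i => ?_⟩, fun i => ?_, fun j => ?_, ?_⟩
    · simpa using h1 i.castSucc j.castSucc
    · simpa using h2 _ _ (Fin.castSucc_lt_castSucc_iff.2 hij)
    · simpa using h3 i.castSucc
    · simpa using h1 i.castSucc (Fin.last n)
    · simpa using h2 _ _ (Fin.castSucc_lt_last j)
    · simpa using h3 (Fin.last n)
  · rintro ⟨hA, hc, hr, hd⟩
    refine ⟨fun i j => ?_, fun i j hij => ?_, fun i => ?_⟩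
    · induction i using Fin.lastCases <;> induction j using Fin.lastCases <;>
        simp [hA.norm_le_one, hc, (hr _).le, hd]
    · induction i using Fin.lastCases <;> induction j using Fin.lastCases <;>
        simp_all [hA.norm_lt_one, (Fin.le_last _).not_gt]
    · induction i using Fin.lastCases <;> simp [hA.norm_diag, hd]

section Ultrametric

variable [IsUltrametricDist K]

lemma norm_det_sub_prod_diag_lt_one {M : Matrix (Fin n) (Fin n) K} (h1 : ∀ i j, ‖M i j‖ ≤ 1)
    (h2 : ∀ i j, j < i → ‖M i j‖ < 1) : ‖M.det - ∏ i, M i i‖ < 1 := by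
  rw [det_apply, ← Finset.add_sum_erase _ _ (Finset.mem_univ 1)]
  simp only [Equiv.Perm.sign_one, one_smul, Equiv.Perm.one_apply, add_sub_cancel_left]
  refine norm_sum_lt_one fun σ hσ => ?_
  obtain ⟨i, hi⟩ : ∃ i, i < σ i := by
    by_contra! h
    exact Finset.ne_of_mem_erase hσ (Equiv.Perm.eq_one_of_forall_apply_le h)
  have hprod : ‖∏ j, M (σ j) j‖ < 1 := by
    rw [norm_prod]
    exact (Finset.prod_le_of_le_one (fun _ => norm_nonneg _) (fun j => h1 _ _) i).trans_lt
      (h2 _ _ hi)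
  rcases Int.units_eq_one_or (Equiv.Perm.sign σ) with hs | hs <;> simpa [hs] using hprod

lemma norm_det_eq_one_iff {M : Matrix (Fin n) (Fin n) K} (h1 : ∀ i j, ‖M i j‖ ≤ 1)
    (h2 : ∀ i j, j < i → ‖M i j‖ < 1) : ‖M.det‖ = 1 ↔ ∀ i, ‖M i i‖ = 1 := by
  rw [norm_eq_one_iff_of_norm_sub_lt_one (norm_det_sub_prod_diag_lt_one h1 h2), norm_prod]
  refine ⟨fun h i => le_antisymm (h1 i i) ?_, fun h => by simp [h]⟩
  exact h ▸ Finset.prod_le_of_le_one (fun _ => norm_nonneg _) (fun j => h1 j j) i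

namespace IsIwahori

variable {M N : Matrix (Fin n) (Fin n) K}

lemma norm_det (hM : IsIwahori M) : ‖M.det‖ = 1 :=
  (norm_det_eq_one_iff hM.norm_le_one hM.norm_lt_one).2 hM.norm_diag

lemma sub (hM : IsIwahori M) (hN : ∀ i j, ‖N i j‖ < 1) : IsIwahori (M - N) where
  norm_le_one i j := (norm_sub_le_max _ _).trans (max_le (hM.norm_le_one i j) (hN i j).le)
  norm_lt_one i j hij := (norm_sub_le_max _ _).trans_lt (max_lt (hM.norm_lt_one i j hij) (hN i j))
  norm_diag i := (norm_eq_one_iff_of_norm_sub_lt_one (by simpa using hN i i)).1 (hM.norm_diag i)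

theorem exists_upper_mul_lower (hM : IsIwahori M) :
    ∃ B U : Matrix (Fin n) (Fin n) K, IsIwahori B ∧ B.IsUpperTriangular ∧
      IsIwahori U ∧ U.IsLowerTriangular ∧ M = B * U := by
  induction n with
  | zero => exact ⟨M, M, hM, fun i => i.elim0, hM, fun i => i.elim0, Subsingleton.elim _ _⟩
  | succ n ih =>
    obtain ⟨A, c, r, d, rfl⟩ : ∃ A c r d, M = blockLast A c r d :=
      ⟨_, _, _, _, (blockLast_eta M).symm⟩
    obtain ⟨hA, hc, hr, hd⟩ := isIwahori_blockLast_iff.1 hM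
    have hd0 : d ≠ 0 := norm_ne_zero_iff.1 (hd ▸ one_ne_zero)
    -- the Schur complement of the unit pivot `d`
    have hS : IsIwahori (A - vecMulVec c (d⁻¹ • r)) := hA.sub fun i j => by
      simpa [vecMulVec_apply, hd] using
        mul_lt_one_of_nonneg_of_lt_one_right (hc i) (norm_nonneg _) (hr j)
    obtain ⟨B, U, hB, hBup, hU, hUlow, hBU⟩ := ih hS
    refine ⟨blockLast B c 0 d, blockLast U 0 (d⁻¹ • r) 1,
      isIwahori_blockLast_iff.2 ⟨hB, hc, by simp, hd⟩, hBup.blockLast c d,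
      isIwahori_blockLast_iff.2 ⟨hU, by simp, fun j => by simpa [hd] using hr j, by simp⟩,
      hUlow.blockLast _ _, ?_⟩
    rw [blockLast_mul_blockLast, ← hBU, sub_add_cancel]
    simp [hd0]

end IsIwahori

end Ultrametric

end Matrix

open Matrix

section

variable {p : ℕ} [Fact p.Prime] {n : ℕ}

lemma mem_iwahori_iff {g : GL (Fin n) ℚ_[p]} :
    g ∈ Iwahori p n ↔ (g : Matrix (Fin n) (Fin n) ℚ_[p]).IsIwahori :=
  ⟨fun ⟨h1, hdet, h2⟩ => ⟨h1, h2, (norm_det_eq_one_iff h1 h2).1 hdet⟩,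
    fun hg => ⟨hg.norm_le_one, hg.norm_det, hg.norm_lt_one⟩⟩

variable (p n) in
lemma one_mem_iwahori : 1 ∈ Iwahori p n := by
  refine mem_iwahori_iff.2 ⟨fun i j => ?_, fun i j hij => ?_, fun i => by simp⟩
  · by_cases h : i = j <;> simp [one_apply, h]
  · simp [one_apply_ne hij.ne']

lemma mul_mem_iwahori {g h : GL (Fin n) ℚ_[p]} (hg : g ∈ Iwahori p n) (hh : h ∈ Iwahori p n) :
    g * h ∈ Iwahori p n := by
  obtain ⟨hg1, hg2, hg3⟩ := hg
  obtain ⟨hh1, hh2, hh3⟩ := hh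
  refine ⟨fun i j => ?_, ?_, fun i j hij => ?_⟩
  · rw [Units.val_mul, mul_apply]
    refine IsUltrametricDist.norm_sum_le_of_forall_le_of_nonneg zero_le_one fun k _ => ?_
    rw [norm_mul]
    exact mul_le_one₀ (hg1 _ _) (norm_nonneg _) (hh1 _ _)
  · rw [Units.val_mul, det_mul, norm_mul, hg2, hh2, one_mul]
  · rw [Units.val_mul, mul_apply]
    refine norm_sum_lt_one fun k _ => ?_
    rw [norm_mul]
    rcases le_or_gt k j with hk | hk
    · exact mul_lt_one_of_nonneg_of_lt_one_left (norm_nonneg _) (hg3 _ _ (hk.trans_lt hij))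
        (hh1 _ _)
    · exact mul_lt_one_of_nonneg_of_lt_one_right (hg1 _ _) (norm_nonneg _) (hh3 _ _ hk)

lemma exists_upper_mul_lower_of_mem_iwahori {g : GL (Fin n) ℚ_[p]} (hg : g ∈ Iwahori p n) :
    ∃ B ∈ Iwahori p n, ∃ U ∈ Iwahori p n,
      (B : Matrix (Fin n) (Fin n) ℚ_[p]).IsUpperTriangular ∧
      (U : Matrix (Fin n) (Fin n) ℚ_[p]).IsLowerTriangular ∧ g = B * U := by
  obtain ⟨B, U, hB, hBup, hU, hUlow, hBU⟩ := (mem_iwahori_iff.1 hg).exists_upper_mul_lower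
  have hdet {M : Matrix (Fin n) (Fin n) ℚ_[p]} (hM : M.IsIwahori) : M.det ≠ 0 :=
    norm_ne_zero_iff.1 (hM.norm_det ▸ one_ne_zero)
  exact ⟨.mkOfDetNeZero B (hdet hB), mem_iwahori_iff.2 hB, .mkOfDetNeZero U (hdet hU),
    mem_iwahori_iff.2 hU, hBup, hUlow, Units.ext hBU⟩

lemma natCast_p_ne_zero : (p : ℚ_[p]) ≠ 0 := Nat.cast_ne_zero.2 (Fact.out : p.Prime).ne_zero

lemma coe_dGL (a : Fin n → ℤ) :
    (dGL p n a : Matrix (Fin n) (Fin n) ℚ_[p]) = diagonal fun i => (p : ℚ_[p]) ^ a i := rfl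

lemma dGL_add (a b : Fin n → ℤ) : dGL p n (a + b) = dGL p n a * dGL p n b := by
  ext : 1
  simp [coe_dGL, zpow_add₀ natCast_p_ne_zero]

lemma dGL_neg (a : Fin n → ℤ) : dGL p n (-a) = (dGL p n a)⁻¹ := by
  rw [eq_inv_iff_mul_eq_one, ← dGL_add, neg_add_cancel]
  ext : 1
  simp [coe_dGL]

lemma dGL_mul_mul_inv_mem_iwahori {b : Fin n → ℤ} {g : GL (Fin n) ℚ_[p]}
    (hg : g ∈ Iwahori p n) (hb : ∀ i j, (g : Matrix (Fin n) (Fin n) ℚ_[p]) i j ≠ 0 → b j ≤ b i) :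
    dGL p n b * g * (dGL p n b)⁻¹ ∈ Iwahori p n := by
  rw [← dGL_neg, mem_iwahori_iff]
  refine (mem_iwahori_iff.1 hg).diagonal_mul_mul_diagonal (fun i => ?_) (fun i j hij => ?_)
  · simp only [Pi.neg_apply, ← zpow_add₀ natCast_p_ne_zero, add_neg_cancel, zpow_zero, norm_one]
  · rw [← zpow_add₀ natCast_p_ne_zero, Padic.norm_p_zpow]
    exact zpow_le_one_of_nonpos₀ (by exact_mod_cast (Fact.out : p.Prime).one_le)
      (by simpa using hb i j hij)

lemma dGL_mul_mul_inv_mem_iwahori_of_isUpperTriangular {a : Fin n → ℤ} (ha : Antitone a)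
    {g : GL (Fin n) ℚ_[p]} (hg : g ∈ Iwahori p n)
    (hup : (g : Matrix (Fin n) (Fin n) ℚ_[p]).IsUpperTriangular) :
    dGL p n a * g * (dGL p n a)⁻¹ ∈ Iwahori p n :=
  dGL_mul_mul_inv_mem_iwahori hg fun _ _ hij => ha (not_lt.1 fun h => hij (hup h))

lemma inv_dGL_mul_mul_mem_iwahori_of_isLowerTriangular {a : Fin n → ℤ} (ha : Antitone a)
    {g : GL (Fin n) ℚ_[p]} (hg : g ∈ Iwahori p n)
    (hlow : (g : Matrix (Fin n) (Fin n) ℚ_[p]).IsLowerTriangular) :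
    (dGL p n a)⁻¹ * g * dGL p n a ∈ Iwahori p n := by
  simpa [dGL_neg] using dGL_mul_mul_inv_mem_iwahori (b := -a) hg
    fun _ _ hij => neg_le_neg (ha (not_lt.1 fun h => hij (hlow h)))

end

theorem doubleCoset_mul_general (p : ℕ) [Fact p.Prime] (n : ℕ)
    (a a' : Fin n → ℤ) (ha : Antitone a) (ha' : Antitone a') :
    (Iwahori p n * {dGL p n a} * Iwahori p n) *
        (Iwahori p n * {dGL p n a'} * Iwahori p n)
      = Iwahori p n * {dGL p n (a + a')} * Iwahori p n := by
  simp only [← DoubleCoset.doubleCoset.eq_1]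
  ext x
  simp only [Set.mem_mul, DoubleCoset.mem_doubleCoset]
  constructor
  · rintro ⟨_, ⟨g₁, hg₁, g₂, hg₂, rfl⟩, _, ⟨g₃, hg₃, g₄, hg₄, rfl⟩, rfl⟩
    obtain ⟨B, hB, U, hU, hBup, hUlow, hBU⟩ :=
      exists_upper_mul_lower_of_mem_iwahori (mul_mem_iwahori hg₂ hg₃)
    refine ⟨g₁ * (dGL p n a * B * (dGL p n a)⁻¹),
      mul_mem_iwahori hg₁ (dGL_mul_mul_inv_mem_iwahori_of_isUpperTriangular ha hB hBup),
      (dGL p n a')⁻¹ * U * dGL p n a' * g₄,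
      mul_mem_iwahori (inv_dGL_mul_mul_mem_iwahori_of_isLowerTriangular ha' hU hUlow) hg₄, ?_⟩
    calc g₁ * dGL p n a * g₂ * (g₃ * dGL p n a' * g₄)
        = g₁ * dGL p n a * (g₂ * g₃) * dGL p n a' * g₄ := by group
      _ = _ := by rw [hBU, dGL_add]; group
  · rintro ⟨g₁, hg₁, g₂, hg₂, rfl⟩
    refine ⟨_, ⟨g₁, hg₁, 1, one_mem_iwahori p n, rfl⟩, _,
      ⟨1, one_mem_iwahori p n, g₂, hg₂, rfl⟩, ?_⟩
    rw [dGL_add]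
    group

/-- For decreasing tuples of integers `a` and `a'`, the product of the
Iwahori double cosets `I d_a I` and `I d_{a'} I` is the double coset `I d_{a+a'} I`,
as subsets of `GL_n(ℚ_p)`. -/
theorem doubleCoset_mul (p : ℕ) [Fact p.Prime] (n : ℕ) (hn : 1 ≤ n)
    (a a' : Fin n → ℤ) (ha : Antitone a) (ha' : Antitone a') :
    (Iwahori p n * {dGL p n a} * Iwahori p n) *
        (Iwahori p n * {dGL p n a'} * Iwahori p n)
      = Iwahori p n * {dGL p n (a + a')} * Iwahori p n :=
  doubleCoset_mul_general p n a a' ha ha'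
end

section
/- For E, E' ∈ ℤ^{n-1}, the right cosets x_E I and x_{E'} I coincide if and only if E ≡ E' modulo p componentwise (i.e. E_j - E'_j ∈ pℤ for all 2 ≤ j ≤ n). In particular the coset x_E I depends only on the image of E in 𝔽_p^{n-1}. -/
/-
Writing `u(c)` for the identity matrix with first row replaced by `(1, c)`, one has
`x_{E'} = x_E · u(p⁻¹(E' - E))`. The Iwahori subgroup is closed under multiplication (entries
below the diagonal of a product pick up a factor from below the diagonal of one of the factors),
so `x_E I = x_{E'} I` exactly when `u(±p⁻¹(E' - E)) ∈ I`, i.e. when `p⁻¹(E' - E)` is integral.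
-/

open Pointwise

/-- The matrix `x_E = [[1, p⁻¹E], [0, p⁻¹·Id]]` (here size `(n+1) × (n+1)`, with
`E ∈ ℤⁿ` filling the rest of the first row, scaled by `p⁻¹`). -/
noncomputable def xMat (p : ℕ) [Fact p.Prime] (n : ℕ) (E : Fin n → ℤ) :
    Matrix (Fin (n + 1)) (Fin (n + 1)) ℚ_[p] :=
  Matrix.of fun i j =>
    if i = 0 then
      (if h : j = 0 then 1 else ((p : ℚ_[p]))⁻¹ * ((E (j.pred h) : ℤ) : ℚ_[p]))
    else if i = j then ((p : ℚ_[p]))⁻¹ else 0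

/-- The matrix `x_E` as an element of `GL_{n+1}(ℚ_p)`. -/
noncomputable def xGL (p : ℕ) [Fact p.Prime] (n : ℕ) (E : Fin n → ℤ) :
    Matrix.GeneralLinearGroup (Fin (n + 1)) ℚ_[p] :=
  Matrix.GeneralLinearGroup.mkOfDetNeZero (xMat p n E)
    (by
      have hp : (p : ℚ_[p]) ≠ 0 := Nat.cast_ne_zero.mpr (Fact.out : p.Prime).ne_zero
      have htri : (xMat p n E).BlockTriangular id := by
        intro i j hij
        have hi : i ≠ 0 := by
          rintro rfl
          exact absurd hij (by simp)
        have hij' : ¬ i = j := fun h => hij.ne h.symm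
        simp only [xMat, Matrix.of_apply, if_neg hi, if_neg hij']
      rw [Matrix.det_of_upperTriangular htri]
      refine Finset.prod_ne_zero_iff.2 fun i _ => ?_
      by_cases hi : i = 0
      · subst hi; simp [xMat]
      · simp only [xMat, Matrix.of_apply, if_neg hi, if_pos rfl]
        exact inv_ne_zero hp)

namespace Submonoid

variable {G : Type*} [Group G]

theorem singleton_mul_eq_singleton_mul_iff (S : Submonoid G) (g g' : G) :
    {g} * (S : Set G) = {g'} * S ↔ g'⁻¹ * g ∈ S ∧ g⁻¹ * g' ∈ S := by
  have subset_iff (a b : G) : {a} * (S : Set G) ⊆ {b} * S ↔ b⁻¹ * a ∈ S := by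
    simp only [Set.singleton_mul, Set.image_subset_iff]
    refine ⟨fun h => ?_, fun h s hs => ⟨b⁻¹ * a * s, S.mul_mem h hs, by group⟩⟩
    obtain ⟨s, hs, hbs⟩ := h S.one_mem
    rwa [← mul_one a, ← show b * s = a * 1 from hbs, inv_mul_cancel_left]
  rw [subset_antisymm_iff, subset_iff, subset_iff]

end Submonoid

namespace Matrix

variable {n R : Type*} [Fintype n] [NormedRing R] [IsUltrametricDist R]

theorem norm_mul_apply_le_one {A B : Matrix n n R} (hA : ∀ i j, ‖A i j‖ ≤ 1)
    (hB : ∀ i j, ‖B i j‖ ≤ 1) (i j : n) : ‖(A * B) i j‖ ≤ 1 :=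
  IsUltrametricDist.norm_sum_le_of_forall_le_of_nonneg zero_le_one fun k _ =>
    (norm_mul_le _ _).trans (mul_le_one₀ (hA i k) (norm_nonneg _) (hB k j))

theorem norm_mul_apply_lt_one [LinearOrder n] {A B : Matrix n n R} (hA : ∀ i j, ‖A i j‖ ≤ 1)
    (hB : ∀ i j, ‖B i j‖ ≤ 1) (hA' : ∀ i j, j < i → ‖A i j‖ < 1)
    (hB' : ∀ i j, j < i → ‖B i j‖ < 1) {i j : n} (hij : j < i) : ‖(A * B) i j‖ < 1 := by
  have : Nonempty n := ⟨i⟩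
  obtain ⟨k, -, hk⟩ := IsUltrametricDist.exists_norm_finsetSum_le Finset.univ
    fun k => A i k * B k j
  refine hk.trans_lt <| (norm_mul_le _ _).trans_lt ?_
  rcases lt_or_ge k i with hki | hik
  · exact mul_lt_one_of_nonneg_of_lt_one_left (norm_nonneg _) (hA' i k hki) (hB k j)
  · exact mul_lt_one_of_nonneg_of_lt_one_right (hA i k) (norm_nonneg _)
      (hB' k j (hij.trans_le hik))

end Matrix

section Unipotent

variable {R : Type*} {n : ℕ}

def firstRowUnipotent [Zero R] [One R] (c : Fin n → R) : Matrix (Fin (n + 1)) (Fin (n + 1)) R :=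
  (1 : Matrix (Fin (n + 1)) (Fin (n + 1)) R).updateRow 0 (Fin.cons (1 : R) c)

@[simp]
theorem firstRowUnipotent_apply_zero [Zero R] [One R] (c : Fin n → R) (j : Fin (n + 1)) :
    firstRowUnipotent c 0 j = (Fin.cons (1 : R) c : Fin (n + 1) → R) j :=
  congrFun Matrix.updateRow_self j

@[simp]
theorem firstRowUnipotent_apply_succ [Zero R] [One R] (c : Fin n → R) (k : Fin n)
    (j : Fin (n + 1)) : firstRowUnipotent c k.succ j = (1 : Matrix _ _ R) k.succ j :=
  congrFun (Matrix.updateRow_ne (Fin.succ_ne_zero k)) j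

theorem blockTriangular_firstRowUnipotent [Zero R] [One R] (c : Fin n → R) :
    (firstRowUnipotent c).BlockTriangular id := by
  intro i j hji
  obtain ⟨k, rfl⟩ := Fin.exists_succ_eq.mpr (Fin.pos_iff_ne_zero.mp (j.zero_le.trans_lt hji))
  rw [firstRowUnipotent_apply_succ]
  exact Matrix.one_apply_ne (ne_of_gt hji)

theorem det_firstRowUnipotent [CommRing R] (c : Fin n → R) : (firstRowUnipotent c).det = 1 := by
  rw [Matrix.det_of_isUpperTriangular (blockTriangular_firstRowUnipotent c)]
  exact Finset.prod_eq_one fun i _ => i.cases (by simp) (by simp)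

end Unipotent

def iwahoriSubmonoid (p : ℕ) [Fact p.Prime] (n : ℕ) :
    Submonoid (Matrix.GeneralLinearGroup (Fin n) ℚ_[p]) where
  carrier := Iwahori p n
  one_mem' := by
    refine ⟨fun i j => ?_, by simp, fun i j hji => by simp [Matrix.one_apply_ne hji.ne']⟩
    rw [Units.val_one, Matrix.one_apply]
    split_ifs <;> simp
  mul_mem' := by
    rintro g h ⟨hg, hg_det, hg_lower⟩ ⟨hh, hh_det, hh_lower⟩
    refine ⟨Matrix.norm_mul_apply_le_one hg hh, ?_,
      fun i j hji => Matrix.norm_mul_apply_lt_one hg hh hg_lower hh_lower hji⟩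
    rw [Units.val_mul, Matrix.det_mul, norm_mul, hg_det, hh_det, one_mul]

section

variable {p : ℕ} [Fact p.Prime]

theorem Padic.norm_inv_p_mul_intCast_le_one_iff (m : ℤ) :
    ‖(p : ℚ_[p])⁻¹ * m‖ ≤ 1 ↔ (p : ℤ) ∣ m := by
  have hp : (0 : ℝ) < p := Nat.cast_pos.mpr (Fact.out : p.Prime).pos
  rw [norm_mul, norm_inv, Padic.norm_p, inv_inv, ← le_inv_mul_iff₀ hp, mul_one]
  simpa using Padic.norm_int_le_pow_iff_dvd (p := p) m 1

theorem mem_Iwahori_iff_of_coe_eq_firstRowUnipotent {n : ℕ}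
    {g : Matrix.GeneralLinearGroup (Fin (n + 1)) ℚ_[p]} {c : Fin n → ℚ_[p]}
    (hg : (g : Matrix (Fin (n + 1)) (Fin (n + 1)) ℚ_[p]) = firstRowUnipotent c) :
    g ∈ Iwahori p (n + 1) ↔ ∀ k, ‖c k‖ ≤ 1 := by
  refine ⟨fun hg_mem k => by simpa [hg] using hg_mem.1 0 k.succ, fun hc => ⟨fun i j => ?_,
    by simp [hg, det_firstRowUnipotent],
    fun i j hji => by simp [hg, blockTriangular_firstRowUnipotent c hji]⟩⟩
  rw [hg]
  induction i using Fin.cases with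
  | zero => induction j using Fin.cases <;> simp [hc]
  | succ k =>
    rw [firstRowUnipotent_apply_succ, Matrix.one_apply]
    split_ifs <;> simp

theorem xMat_mul_firstRowUnipotent {n : ℕ} (E E' : Fin n → ℤ) :
    xMat p n E * firstRowUnipotent (fun k => (p : ℚ_[p])⁻¹ * ((E' k - E k : ℤ) : ℚ_[p])) =
      xMat p n E' := by
  ext i j
  rw [Matrix.mul_apply, Fin.sum_univ_succ]
  induction i using Fin.cases with
  | zero =>
    induction j using Fin.cases with
    | zero => simp [xMat]
    | succ m =>
      simp [xMat, Matrix.one_apply]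
      ring
  | succ k =>
    rw [Finset.sum_eq_single k (fun x _ hxk => by simp [xMat, hxk.symm]) (by simp)]
    simp [xMat, Matrix.one_apply]

theorem coe_xGL_inv_mul_xGL {n : ℕ} (E E' : Fin n → ℤ) :
    (((xGL p n E)⁻¹ * xGL p n E' : Matrix.GeneralLinearGroup (Fin (n + 1)) ℚ_[p]) :
      Matrix (Fin (n + 1)) (Fin (n + 1)) ℚ_[p]) =
      firstRowUnipotent (fun k => (p : ℚ_[p])⁻¹ * ((E' k - E k : ℤ) : ℚ_[p])) := by
  have hfactor : (xGL p n E' : Matrix (Fin (n + 1)) (Fin (n + 1)) ℚ_[p]) =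
      xGL p n E * firstRowUnipotent (fun k => (p : ℚ_[p])⁻¹ * ((E' k - E k : ℤ) : ℚ_[p])) :=
    (xMat_mul_firstRowUnipotent E E').symm
  rw [Units.val_mul, hfactor, Units.inv_mul_cancel_left]

end

theorem xE_coset_eq_iff_general (p : ℕ) [Fact p.Prime] (n : ℕ)
    (E E' : Fin n → ℤ) :
    {xGL p n E} * Iwahori p (n + 1) = {xGL p n E'} * Iwahori p (n + 1) ↔
      ∀ j : Fin n, (p : ℤ) ∣ E j - E' j := by
  refine ((iwahoriSubmonoid p (n + 1)).singleton_mul_eq_singleton_mul_iff _ _).trans ?_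
  change _ ∈ Iwahori p (n + 1) ∧ _ ∈ Iwahori p (n + 1) ↔ _
  simp only [mem_Iwahori_iff_of_coe_eq_firstRowUnipotent (coe_xGL_inv_mul_xGL _ _),
    Padic.norm_inv_p_mul_intCast_le_one_iff]
  exact ⟨fun h => h.1, fun h => ⟨h, fun j => dvd_sub_comm.mp (h j)⟩⟩

/-- For `E, E' ∈ ℤⁿ`, the right cosets `x_E I` and `x_{E'} I` of the
Iwahori subgroup `I ⊆ GL_{n+1}(ℚ_p)` coincide if and only if `E ≡ E'` modulo `p`
componentwise.  In particular the coset `x_E I` depends only on the image of `E` in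
`𝔽_pⁿ`. -/
theorem xE_coset_eq_iff (p : ℕ) [Fact p.Prime] (n : ℕ) (hn : 1 ≤ n)
    (E E' : Fin n → ℤ) :
    {xGL p n E} * Iwahori p (n + 1) = {xGL p n E'} * Iwahori p (n + 1) ↔
      ∀ j : Fin n, (p : ℤ) ∣ E j - E' j :=
  xE_coset_eq_iff_general p n E E'
end
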